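/- arXiv:1408.3979 — 3 statements merged into one kernel-verified Lean document; each statement's English description precedes it below -/
import Mathlib

section
/- Fix a polynomial degree d ≥ 2, a bandwidth h_n ∈ (0,1/2), real data Y_1,…,Y_n, and define ǧ_d(x) := inf{ p(x) : p a real polynomial of degree at most d with Y_i ≤ p(i/n) for all i ∈ {1,…,n} with |i/n − x| ≤ h_n }. Then ǧ_d(x) = −∞ for every x ∈ [h_n, 1−h_n] with x ∉ {j/n : j = 1,…,n}, while ǧ_d(j/n) = Y_j for every design point j/n ∈ [h_n, 1−h_n]. -/
open MeasureTheory Filter Set Polynomial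

noncomputable section

/-- The set of values at `x` of polynomials of degree at most `d` lying above all data points
`(i/n, Y i)` with `|i/n − x| ≤ h`; its infimum is the naive degree-`d` generalization `ǧ_d(x)`
of the Hall–Van Keilegom local linear boundary estimator. -/
def HVKValues (d n : ℕ) (h : ℝ) (Y : ℕ → ℝ) (x : ℝ) : Set ℝ :=
  {v : ℝ | ∃ p : Polynomial ℝ, p.natDegree ≤ d ∧
    (∀ i ∈ Finset.Icc 1 n, |(i:ℝ)/n - x| ≤ h → Y i ≤ p.eval ((i:ℝ)/n)) ∧
    v = p.eval x}

lemma hvk_quad_natDegree (a b x : ℝ) :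
    (Polynomial.C a + Polynomial.C b * (Polynomial.X - Polynomial.C x) ^ 2).natDegree ≤ 2 := by
  compute_degree

lemma hvk_quad_eval (a b x t : ℝ) :
    (Polynomial.C a + Polynomial.C b * (Polynomial.X - Polynomial.C x) ^ 2).eval t
      = a + b * (t - x) ^ 2 := by
  simp

/-- **Remark 2.5, second part**: for `d ≥ 2` the naive estimator `ǧ_d` is useless:
`ǧ_d(x) = −∞` for every non-design point `x ∈ [h, 1−h]`, while `ǧ_d(j/n) = Y_j` at every
design point `j/n ∈ [h, 1−h]`. -/
theorem naive_higher_degree_estimator_useless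
    (d n : ℕ) (hd : 2 ≤ d) (h : ℝ) (hh : h ∈ Set.Ioo (0:ℝ) (1/2)) (Y : ℕ → ℝ) :
    -- ǧ_d(x) = −∞ off the design points
    (∀ x ∈ Set.Icc h (1 - h), (∀ j ∈ Finset.Icc 1 n, x ≠ (j:ℝ)/n) →
      ¬ BddBelow (HVKValues d n h Y x)) ∧
    -- ǧ_d(j/n) = Y_j at the design points
    (∀ j ∈ Finset.Icc 1 n, (j:ℝ)/n ∈ Set.Icc h (1 - h) →
      sInf (HVKValues d n h Y ((j:ℝ)/n)) = Y j) := by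
  constructor
  · -- non-design points
    intro x hx hne hB
    obtain ⟨b, hb⟩ := hB
    set a : ℝ := b - 1 with ha
    set K : ℝ := ∑ i ∈ Finset.Icc 1 n, max 0 ((Y i - a) / (((i:ℝ)/n - x) ^ 2)) with hK
    have hmem : a + K * (x - x) ^ 2 ∈ HVKValues d n h Y x := by
      refine ⟨Polynomial.C a + Polynomial.C K * (Polynomial.X - Polynomial.C x) ^ 2,
        le_trans (hvk_quad_natDegree a K x) hd, ?_, (hvk_quad_eval a K x x).symm⟩
      intro i hi _
      rw [hvk_quad_eval]
      have hs : (0:ℝ) < ((i:ℝ)/n - x) ^ 2 := by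
        have : (i:ℝ)/n - x ≠ 0 := sub_ne_zero.2 fun hc => hne i hi hc.symm
        positivity
      have hKge : (Y i - a) / (((i:ℝ)/n - x) ^ 2) ≤ K := by
        refine le_trans (le_max_right 0 _) ?_
        exact Finset.single_le_sum (f := fun i => max 0 ((Y i - a) / (((i:ℝ)/n - x) ^ 2)))
          (fun j _ => le_max_left 0 _) hi
      have := (div_le_iff₀ hs).1 hKge
      linarith
    have := hb hmem
    simp only [sub_self] at this
    have : b ≤ a := by linarith [this]
    linarith [ha]
  · -- design points
    intro j hj _
    have hj1 : 1 ≤ j := (Finset.mem_Icc.1 hj).1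
    have hjn : j ≤ n := (Finset.mem_Icc.1 hj).2
    have hn : (0:ℝ) < n := by
      have : 1 ≤ n := le_trans hj1 hjn
      exact_mod_cast Nat.lt_of_lt_of_le Nat.zero_lt_one this
    set K : ℝ := ∑ i ∈ Finset.Icc 1 n, max 0 ((n:ℝ) ^ 2 * (Y i - Y j)) with hK
    have hK0 : 0 ≤ K :=
      Finset.sum_nonneg fun i _ => le_max_left 0 _
    have hmem : Y j ∈ HVKValues d n h Y ((j:ℝ)/n) := by
      refine ⟨Polynomial.C (Y j) + Polynomial.C K * (Polynomial.X - Polynomial.C ((j:ℝ)/n)) ^ 2,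
        le_trans (hvk_quad_natDegree _ K _) hd, ?_, ?_⟩
      · intro i hi _
        rw [hvk_quad_eval]
        rcases eq_or_ne i j with rfl | hij
        · simp
        · have hKi : (n:ℝ) ^ 2 * (Y i - Y j) ≤ K := by
            refine le_trans (le_max_right 0 _) ?_
            exact Finset.single_le_sum (f := fun i => max 0 ((n:ℝ) ^ 2 * (Y i - Y j)))
              (fun j _ => le_max_left 0 _) hi
          have habs : (1:ℝ) ≤ |(i:ℝ) - (j:ℝ)| := by
            have : ((i:ℤ) - (j:ℤ)) ≠ 0 := sub_ne_zero.2 (by exact_mod_cast hij)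
            have h1 : (1:ℤ) ≤ |(i:ℤ) - (j:ℤ)| := Int.one_le_abs this
            calc (1:ℝ) ≤ (|(i:ℤ) - (j:ℤ)| : ℤ) := by exact_mod_cast h1
              _ = |(i:ℝ) - (j:ℝ)| := by push_cast [Int.cast_abs]; ring_nf
          have hsq : (1:ℝ) / (n:ℝ) ^ 2 ≤ ((i:ℝ)/n - (j:ℝ)/n) ^ 2 := by
            have : (i:ℝ)/n - (j:ℝ)/n = ((i:ℝ) - (j:ℝ)) / n := by ring
            rw [this, div_pow]
            rw [div_le_div_iff₀ (by positivity) (by positivity)]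
            have : (1:ℝ) ≤ ((i:ℝ) - (j:ℝ)) ^ 2 := by
              calc (1:ℝ) = 1 ^ 2 := by ring
                _ ≤ |(i:ℝ) - (j:ℝ)| ^ 2 := by
                    apply pow_le_pow_left₀ (by norm_num) habs
                _ = ((i:ℝ) - (j:ℝ)) ^ 2 := sq_abs _
            nlinarith
          have hmul : K * ((1:ℝ) / (n:ℝ) ^ 2) ≤ K * (((i:ℝ)/n - (j:ℝ)/n) ^ 2) :=
            mul_le_mul_of_nonneg_left hsq hK0
          have hKdiv : (Y i - Y j) ≤ K * ((1:ℝ) / (n:ℝ) ^ 2) := by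
            rw [mul_one_div, le_div_iff₀ (by positivity)]
            nlinarith
          linarith
      · rw [hvk_quad_eval]; ring
    have hlb : ∀ v ∈ HVKValues d n h Y ((j:ℝ)/n), Y j ≤ v := by
      rintro v ⟨p, _, hcon, rfl⟩
      exact hcon j hj (by simp [le_of_lt hh.1])
    exact le_antisymm (csInf_le ⟨Y j, hlb⟩ hmem) (le_csInf ⟨Y j, hmem⟩ hlb)

end
end

section
/- Let ε_1,…,ε_n be i.i.d. random variables satisfying (F1) and let (h_n) satisfy (H1). Then for any fixed finite collection I_1,…,I_m of disjoint non-degenerate subintervals of [−1,1], sup_{x ∈ [h_n, 1−h_n]} max_{1 ≤ j ≤ m} min{ −ε_i : i ∈ {1,…,n}, (i/n − x)/h_n ∈ I_j } = O_P( (|log h_n|/(n h_n))^{1/α} ). -/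
open MeasureTheory Filter Set Polynomial ProbabilityTheory

noncomputable section

/-- (G1) with explicit Hölder constant `C`. -/
def HolderClassWith (g : ℝ → ℝ) (β C : ℝ) : Prop :=
  ContDiffOn ℝ (⌊β⌋₊ : ℕ) g (Set.Icc 0 1) ∧
  ∀ t ∈ Set.Icc (0:ℝ) 1, ∀ x ∈ Set.Icc (0:ℝ) 1,
    |iteratedDerivWithin ⌊β⌋₊ g (Set.Icc 0 1) t - iteratedDerivWithin ⌊β⌋₊ g (Set.Icc 0 1) x|
      ≤ C * |t - x| ^ (β - ⌊β⌋₊)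

/-- (G1): Hölder class of order β on [0,1]. -/
def HolderClass (g : ℝ → ℝ) (β : ℝ) : Prop := ∃ C : ℝ, HolderClassWith g β C

/-- `ghat` is a boundary estimator with data `Y`, bandwidth `hn` and smoothness `β`:
at each `x ∈ [0,1]`, `ghat x = p x` for a polynomial of degree `⌈β⌉ − 1` minimizing the
local integral `∫_{x−hn}^{x+hn} p` subject to lying above all data points `(j/n, Y j)`
with `|j/n − x| ≤ hn`. -/
def IsBoundaryEst (β : ℝ) (n : ℕ) (hn : ℝ) (Y : ℕ → ℝ) (ghat : ℝ → ℝ) : Prop :=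
  ∀ x ∈ Set.Icc (0:ℝ) 1, ∃ p : Polynomial ℝ,
    p.natDegree ≤ ⌈β⌉₊ - 1 ∧
    (∀ j ∈ Finset.Icc 1 n, |(j:ℝ)/n - x| ≤ hn → Y j ≤ p.eval ((j:ℝ)/n)) ∧
    (∀ q : Polynomial ℝ, q.natDegree ≤ ⌈β⌉₊ - 1 →
      (∀ j ∈ Finset.Icc 1 n, |(j:ℝ)/n - x| ≤ hn → Y j ≤ q.eval ((j:ℝ)/n)) →
      (∫ t in (x - hn)..(x + hn), p.eval t) ≤ ∫ t in (x - hn)..(x + hn), q.eval t) ∧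
    ghat x = p.eval x

/-- i.i.d. errors with common cdf `F`. -/
def IIDWithCDF {Ω : Type*} [MeasurableSpace Ω] (μ : Measure Ω) (ε : ℕ → Ω → ℝ)
    (F : ℝ → ℝ) : Prop :=
  (∀ i, Measurable (ε i)) ∧
  iIndepFun ε μ ∧
  ∀ i y, μ {ω | ε i ω ≤ y} = ENNReal.ofReal (F y)

/-- (F1): errors supported on (−∞,0] and F(y) = 1 − c|y|^α + o(|y|^α) as y ↑ 0. -/
def ErrF1 (F : ℝ → ℝ) (c α : ℝ) : Prop :=
  0 < c ∧ 0 < α ∧ (∀ y : ℝ, 0 ≤ y → F y = 1) ∧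
  Tendsto (fun y => (F y - (1 - c * |y| ^ α)) / |y| ^ α) (nhdsWithin 0 (Set.Iio 0)) (nhds 0)


/-! Let `T = C (|log h|/(n h))^{1/α}`. A window `x + h [l_j, u_j]` with `x ∈ [h, 1 - h]` covers
at least `δ n h` consecutive design points, `δ` the shortest interval length, so it contains one
of the `n / L` consecutive index blocks of length `L ≈ δ n h / 2`. By independence and (F1), all
errors of a block fall below `-T` with probability at most `F(-T)^L ≤ exp(-L c T^α / 2) ≤ h²` once
`C^α = 16/(cδ)`, and the union bound over the blocks gives `(n / L) h² ≤ 4 h / δ → 0`. -/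

open Topology

theorem Finset.exists_pos_forall_le {ι : Type*} (s : Finset ι) {f : ι → ℝ}
    (hf : ∀ i ∈ s, 0 < f i) : ∃ δ > 0, ∀ i ∈ s, δ ≤ f i := by
  have hle : ∀ᶠ δ in 𝓝[>] (0 : ℝ), ∀ i ∈ s, δ ≤ f i :=
    nhdsWithin_le_nhds <| (eventually_all_finset s).2 fun i hi => eventually_le_nhds (hf i hi)
  obtain ⟨δ, hδ, hδle⟩ := (eventually_mem_nhdsWithin.and hle).exists
  exact ⟨δ, hδ, hδle⟩

theorem ErrF1.exists_cdf_neg_le_exp {F : ℝ → ℝ} {c α : ℝ} (hF : ErrF1 F c α) :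
    ∃ η > 0, ∀ T, 0 ≤ T → T < η → F (-T) ≤ Real.exp (-(c / 2 * T ^ α)) := by
  obtain ⟨hc, hα, hF0, hlim⟩ := hF
  obtain ⟨η, hη, hclose⟩ := Metric.tendsto_nhdsWithin_nhds.mp hlim (c / 2) (half_pos hc)
  refine ⟨η, hη, fun T hT hTη => ?_⟩
  obtain rfl | hT := hT.eq_or_lt
  · simp [hF0, Real.zero_rpow hα.ne']
  have hTα : 0 < T ^ α := Real.rpow_pos_of_pos hT α
  have hrem := hclose (show -T ∈ Iio (0 : ℝ) by simpa using hT)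
    (by rwa [Real.dist_eq, sub_zero, abs_neg, abs_of_pos hT])
  rw [Real.dist_eq, sub_zero, abs_neg, abs_of_pos hT, abs_div, abs_of_pos hTα,
    div_lt_iff₀ hTα] at hrem
  calc F (-T) ≤ 1 - c / 2 * T ^ α := by linarith [(abs_lt.mp hrem).2]
    _ ≤ Real.exp (-(c / 2 * T ^ α)) := Real.one_sub_le_exp_neg _

theorem IIDWithCDF.measure_forall_lt_le_exp {Ω : Type*} [MeasurableSpace Ω] {μ : Measure Ω}
    {ε : ℕ → Ω → ℝ} {F : ℝ → ℝ} (hε : IIDWithCDF μ ε F) {y t : ℝ}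
    (hF : F y ≤ Real.exp (-t)) (s : Finset ℕ) :
    μ {ω | ∀ i ∈ s, ε i ω < y} ≤ ENNReal.ofReal (Real.exp (-(s.card * t))) := by
  have hset : {ω | ∀ i ∈ s, ε i ω < y} = ⋂ i ∈ s, ε i ⁻¹' Iio y := by ext; simp
  rw [hset, hε.2.1.meas_biInter fun i _ => ⟨Iio y, measurableSet_Iio, rfl⟩, neg_mul_eq_mul_neg,
    Real.exp_nat_mul, ENNReal.ofReal_pow (Real.exp_nonneg _), ← Finset.prod_const]
  refine Finset.prod_le_prod' fun i _ => ?_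
  calc μ (ε i ⁻¹' Iio y) ≤ μ {ω | ε i ω ≤ y} :=
        measure_mono fun ω hω => (show ε i ω < y from hω).le
    _ = ENNReal.ofReal (F y) := hε.2.2 i y
    _ ≤ ENNReal.ofReal (Real.exp (-t)) := ENNReal.ofReal_le_ofReal hF

theorem exists_nat_mul_mem_Icc {a b : ℝ} {L : ℕ} (hL : 0 < L) (ha : 0 ≤ a)
    (hab : a + 2 * L ≤ b) : ∃ k : ℕ, a ≤ k * L ∧ ((k + 1 : ℕ) * L : ℝ) ≤ b := by
  have hL' : (0 : ℝ) < L := by exact_mod_cast hL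
  refine ⟨⌈a / L⌉₊, (div_le_iff₀ hL').mp (Nat.le_ceil _), ?_⟩
  have hk : (⌈a / L⌉₊ : ℝ) * L < (a / L + 1) * L :=
    mul_lt_mul_of_pos_right (Nat.ceil_lt_add_one (by positivity)) hL'
  rw [add_mul, div_mul_cancel₀ _ hL'.ne'] at hk
  push_cast
  linarith

theorem div_sub_div_mem_Icc {n h x l u y : ℝ} (hn : 0 < n) (hh : 0 < h)
    (hy : y ∈ Icc (n * (x + l * h)) (n * (x + u * h))) : (y / n - x) / h ∈ Icc l u := by
  rw [mem_Icc, le_div_iff₀ hh, div_le_iff₀ hh, le_sub_iff_add_le, sub_le_iff_le_add,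
    le_div_iff₀ hn, div_le_iff₀ hn]
  constructor <;> linarith [hy.1, hy.2]

def indexBlock (L k : ℕ) : Finset ℕ := Finset.Icc (k * L + 1) ((k + 1) * L)

theorem card_indexBlock (L k : ℕ) : (indexBlock L k).card = L := by
  rw [indexBlock, Nat.card_Icc, add_mul, one_mul]
  omega

theorem exists_indexBlock_subset_window {n L : ℕ} {h x l u : ℝ} (hn : 0 < n) (hL : 0 < L)
    (hh : 0 < h) (hx : x ∈ Icc h (1 - h)) (hl : -1 ≤ l) (hu : u ≤ 1)
    (hlen : 2 * L ≤ n * h * (u - l)) :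
    ∃ k < n / L, ∀ i ∈ indexBlock L k, i ∈ Finset.Icc 1 n ∧ ((i : ℝ) / n - x) / h ∈ Icc l u := by
  have hn' : (0 : ℝ) < n := by exact_mod_cast hn
  have hleft : 0 ≤ x + l * h := by nlinarith [hx.1]
  have hright : x + u * h ≤ 1 := by nlinarith [hx.2]
  obtain ⟨k, hak, hkb⟩ := exists_nat_mul_mem_Icc hL (mul_nonneg hn'.le hleft)
    (b := n * (x + u * h)) (by linarith)
  have hkn : (k + 1) * L ≤ n := by
    exact_mod_cast hkb.trans (by nlinarith : (n : ℝ) * (x + u * h) ≤ n)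
  refine ⟨k, Nat.lt_iff_add_one_le.2 ((Nat.le_div_iff_mul_le hL).2 hkn), fun i hi => ?_⟩
  rw [indexBlock, Finset.mem_Icc] at hi
  have hik : (k * L + 1 : ℕ) ≤ (i : ℝ) := by exact_mod_cast hi.1
  have hki : (i : ℝ) ≤ ((k + 1 : ℕ) * L : ℝ) := by exact_mod_cast hi.2
  push_cast at hik
  refine ⟨Finset.mem_Icc.2 ⟨by omega, by omega⟩, div_sub_div_mem_Icc hn' hh ⟨?_, ?_⟩⟩ <;> linarith

/-- The event `sup_{x ∈ [h, 1-h]} max_j min {-ε_i : (i/n - x)/h ∈ [l_j, u_j]} > T`, windows without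
design points being excluded. -/
def blockMinimaExceed {Ω : Type*} (ε : ℕ → Ω → ℝ) (n : ℕ) (h : ℝ) (m : ℕ) (l u : ℕ → ℝ)
    (T : ℝ) : Set Ω :=
  {ω | ∃ x ∈ Set.Icc h (1 - h), ∃ j ∈ Finset.Icc 1 m,
    (∃ i ∈ Finset.Icc 1 n, ((i : ℝ) / n - x) / h ∈ Set.Icc (l j) (u j)) ∧
    ∀ i ∈ Finset.Icc 1 n, ((i : ℝ) / n - x) / h ∈ Set.Icc (l j) (u j) → T < -(ε i ω)}

theorem blockMinimaExceed_subset_iUnion {Ω : Type*} {ε : ℕ → Ω → ℝ} {n L m : ℕ}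
    {h δ T : ℝ} {l u : ℕ → ℝ} (hn : 0 < n) (hL : 0 < L) (hh : 0 < h)
    (hl : ∀ j ∈ Finset.Icc 1 m, -1 ≤ l j) (hu : ∀ j ∈ Finset.Icc 1 m, u j ≤ 1)
    (hδ : ∀ j ∈ Finset.Icc 1 m, δ ≤ u j - l j) (hlen : 2 * L ≤ n * h * δ) :
    blockMinimaExceed ε n h m l u T ⊆
      ⋃ k ∈ Finset.range (n / L), {ω | ∀ i ∈ indexBlock L k, T < -(ε i ω)} := by
  rintro ω ⟨x, hx, j, hj, -, hall⟩
  have hlen' : 2 * L ≤ n * h * (u j - l j) :=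
    hlen.trans (mul_le_mul_of_nonneg_left (hδ j hj) (by positivity))
  obtain ⟨k, hk, hblock⟩ := exists_indexBlock_subset_window hn hL hh hx (hl j hj) (hu j hj) hlen'
  exact mem_biUnion (Finset.mem_range.2 hk) fun i hi => hall i (hblock i hi).1 (hblock i hi).2

theorem measure_blockMinimaExceed_le {Ω : Type*} [MeasurableSpace Ω] {μ : Measure Ω}
    {ε : ℕ → Ω → ℝ} {F : ℝ → ℝ} (hε : IIDWithCDF μ ε F) {n m : ℕ} {h δ T t : ℝ}
    {l u : ℕ → ℝ} (hδ : 0 < δ) (hh0 : 0 < h) (hh1 : h < 1)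
    (hl : ∀ j ∈ Finset.Icc 1 m, -1 ≤ l j) (hu : ∀ j ∈ Finset.Icc 1 m, u j ≤ 1)
    (hδle : ∀ j ∈ Finset.Icc 1 m, δ ≤ u j - l j) (hnh : 4 ≤ δ * n * h)
    (hF : F (-T) ≤ Real.exp (-t)) (ht : 8 * |Real.log h| ≤ δ * n * h * t) :
    μ (blockMinimaExceed ε n h m l u T) ≤ ENNReal.ofReal (4 * h / δ) := by
  have hn : 0 < n := Nat.pos_of_ne_zero fun hn => by simp [hn] at hnh; linarith
  set L := ⌊δ * n * h / 2⌋₊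
  have hL2 : 2 * (L : ℝ) ≤ n * h * δ := by
    linarith [Nat.floor_le (by positivity : 0 ≤ δ * n * h / 2)]
  have hL4 : δ * n * h / 4 ≤ L := by linarith [Nat.lt_floor_add_one (δ * n * h / 2)]
  have hL : 0 < L := by exact_mod_cast (show (0 : ℝ) < L by linarith)
  have hlog : |Real.log h| = -Real.log h := abs_of_neg (Real.log_neg hh0 hh1)
  have ht0 : 0 ≤ t := nonneg_of_mul_nonneg_right (by linarith [abs_nonneg (Real.log h)])
    (by positivity : 0 < δ * n * h)
  have hblock : ∀ k, μ {ω | ∀ i ∈ indexBlock L k, T < -(ε i ω)} ≤ ENNReal.ofReal (h ^ 2) :=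
      fun k => by
    simp_rw [lt_neg]
    refine (hε.measure_forall_lt_le_exp hF _).trans (ENNReal.ofReal_le_ofReal ?_)
    calc Real.exp (-((indexBlock L k).card * t))
        ≤ Real.exp (Real.log h + Real.log h) := by
          rw [card_indexBlock, Real.exp_le_exp]
          nlinarith [mul_le_mul_of_nonneg_right hL4 ht0]
      _ = h ^ 2 := by rw [Real.exp_add, Real.exp_log hh0, sq]
  have hcount : ((n / L : ℕ) : ℝ) * h ^ 2 ≤ 4 * h / δ := by
    have hdiv : ((n / L : ℕ) : ℝ) ≤ 4 / (δ * h) :=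
      Nat.cast_div_le.trans <| (div_le_div_iff₀ (by positivity) (by positivity)).2 (by nlinarith)
    calc ((n / L : ℕ) : ℝ) * h ^ 2 ≤ 4 / (δ * h) * h ^ 2 := by gcongr
      _ = 4 * h / δ := by field_simp
  calc μ (blockMinimaExceed ε n h m l u T)
      ≤ ∑ k ∈ Finset.range (n / L), μ {ω | ∀ i ∈ indexBlock L k, T < -(ε i ω)} :=
        (measure_mono (blockMinimaExceed_subset_iUnion hn hL hh0 hl hu hδle hL2)).trans
          (measure_biUnion_finset_le _ _)
    _ ≤ ∑ _k ∈ Finset.range (n / L), ENNReal.ofReal (h ^ 2) :=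
        Finset.sum_le_sum fun k _ => hblock k
    _ = ENNReal.ofReal (((n / L : ℕ) : ℝ) * h ^ 2) := by
        rw [Finset.sum_const, Finset.card_range, nsmul_eq_mul, ENNReal.ofReal_mul (by positivity),
          ENNReal.ofReal_natCast]
    _ ≤ ENNReal.ofReal (4 * h / δ) := ENNReal.ofReal_le_ofReal hcount

theorem mul_half_mul_threshold_rpow {c α δ n h x : ℝ} (hc : 0 < c) (hα : α ≠ 0) (hδ : 0 < δ)
    (hn : 0 < n) (hh : 0 < h) (hx : 0 ≤ x) :
    δ * n * h * (c / 2 * ((16 / (c * δ)) ^ (1 / α) * (x / (n * h)) ^ (1 / α)) ^ α) = 8 * x := by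
  rw [← Real.mul_rpow (by positivity) (by positivity), one_div,
    Real.rpow_inv_rpow (by positivity) hα]
  field_simp
  ring

section Bandwidth

variable {h : ℕ → ℝ}

theorem tendsto_abs_log_div_of_tendsto_div_abs_log
    (hH1 : Tendsto (fun n : ℕ => (n : ℝ) * h n / |Real.log (h n)|) atTop atTop) :
    Tendsto (fun n : ℕ => |Real.log (h n)| / (n * h n)) atTop (𝓝 0) :=
  (tendsto_inv_atTop_zero.comp hH1).congr fun n => by simp only [Function.comp_apply, inv_div]

theorem tendsto_mul_atTop_of_tendsto_div_abs_log (hpos : ∀ n, 0 < h n)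
    (hto0 : Tendsto h atTop (𝓝 0))
    (hH1 : Tendsto (fun n : ℕ => (n : ℝ) * h n / |Real.log (h n)|) atTop atTop) :
    Tendsto (fun n : ℕ => (n : ℝ) * h n) atTop atTop := by
  have hlog : Tendsto (fun n => |Real.log (h n)|) atTop atTop :=
    tendsto_abs_atBot_atTop.comp <| Real.tendsto_log_nhdsGT_zero.comp <|
      tendsto_nhdsWithin_iff.2 ⟨hto0, .of_forall hpos⟩
  refine tendsto_atTop_mono' atTop ?_ hH1
  filter_upwards [hlog.eventually_ge_atTop 1] with n hn
  exact div_le_self (mul_nonneg n.cast_nonneg (hpos n).le) hn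

end Bandwidth

theorem block_minima_uniform_rate_general
    {Ω : Type*} [MeasurableSpace Ω] (μ : Measure Ω)
    (ε : ℕ → Ω → ℝ) (F : ℝ → ℝ) (c α : ℝ)
    -- (F1)
    (hiid : IIDWithCDF μ ε F) (hF1 : ErrF1 F c α)
    -- (H1)
    (h : ℕ → ℝ) (hpos : ∀ n, 0 < h n)
    (hto0 : Tendsto h atTop (nhds 0))
    (hH1 : Tendsto (fun n : ℕ => (n : ℝ) * h n / |Real.log (h n)|) atTop atTop)
    -- the disjoint non-degenerate subintervals I_j = [l j, u j] ⊆ [−1,1], j = 1,…,m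
    (m : ℕ) (l u : ℕ → ℝ)
    (hlu : ∀ j ∈ Finset.Icc 1 m, l j < u j)
    (hsub : ∀ j ∈ Finset.Icc 1 m, Set.Icc (l j) (u j) ⊆ Set.Icc (-1:ℝ) 1) :
    ∀ e : ℝ, 0 < e → ∃ C : ℝ,
      Filter.limsup (fun n : ℕ =>
          μ {ω | ∃ x ∈ Set.Icc (h n) (1 - h n), ∃ j ∈ Finset.Icc 1 m,
              (∃ i ∈ Finset.Icc 1 n, ((i:ℝ)/n - x)/h n ∈ Set.Icc (l j) (u j)) ∧
              ∀ i ∈ Finset.Icc 1 n, ((i:ℝ)/n - x)/h n ∈ Set.Icc (l j) (u j) →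
                C * (|Real.log (h n)| / ((n : ℝ) * h n)) ^ (1/α) < -(ε i ω)}) atTop
        ≤ ENNReal.ofReal e := by
  intro e he
  obtain ⟨η, hη, hFη⟩ := hF1.exists_cdf_neg_le_exp
  obtain ⟨hc, hα, -, -⟩ := hF1
  obtain ⟨δ, hδ, hδle⟩ := (Finset.Icc 1 m).exists_pos_forall_le fun j hj => sub_pos.2 (hlu j hj)
  have hl : ∀ j ∈ Finset.Icc 1 m, -1 ≤ l j := fun j hj => (hsub j hj ⟨le_rfl, (hlu j hj).le⟩).1
  have hu : ∀ j ∈ Finset.Icc 1 m, u j ≤ 1 := fun j hj => (hsub j hj ⟨(hlu j hj).le, le_rfl⟩).2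
  have hT : Tendsto (fun n : ℕ =>
      (16 / (c * δ)) ^ (1 / α) * (|Real.log (h n)| / (n * h n)) ^ (1 / α)) atTop (𝓝 0) := by
    simpa using ((tendsto_abs_log_div_of_tendsto_div_abs_log hH1).rpow_const_nhds_zero
      (by positivity)).const_mul ((16 / (c * δ)) ^ (1 / α))
  have hbound : Tendsto (fun n => 4 * h n / δ) atTop (𝓝 0) := by
    simpa using (hto0.const_mul 4).div_const δ
  refine ⟨(16 / (c * δ)) ^ (1 / α), limsup_le_of_le (by isBoundedDefault) ?_⟩
  have hδnh : Tendsto (fun n : ℕ => δ * (n * h n)) atTop atTop :=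
    (tendsto_mul_atTop_of_tendsto_div_abs_log hpos hto0 hH1).const_mul_atTop hδ
  filter_upwards [hto0.eventually_lt_const one_pos, hT.eventually_lt_const hη,
    hδnh.eventually_ge_atTop 4, hbound.eventually_le_const he] with n hh1 hTη hnh hhe
  have hh0 := hpos n
  have hn : (0 : ℝ) < n := pos_of_mul_pos_left (pos_of_mul_pos_right (by linarith) hδ.le) hh0.le
  have ht := mul_half_mul_threshold_rpow hc hα.ne' hδ hn hh0 (abs_nonneg (Real.log (h n)))
  exact (measure_blockMinimaExceed_le hiid hδ hh0 hh1 hl hu hδle (by rwa [mul_assoc])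
    (hFη _ (by positivity) hTη) ht.ge).trans (ENNReal.ofReal_le_ofReal hhe)

/-- **Lemma A.2**: under (F1) and (H1), for any fixed finite collection of disjoint
non-degenerate subintervals `I_1, …, I_m` of `[−1,1]`,
`sup_{x ∈ [h_n,1−h_n]} max_{1 ≤ j ≤ m} min{−ε_i : (i/n − x)/h_n ∈ I_j} = O_P((|log h_n|/(n h_n))^{1/α})`
(the event that the sup–max–min exceeds the threshold is expressed by the existence of a
window all of whose errors exceed the threshold). -/
theorem block_minima_uniform_rate
    {Ω : Type*} [MeasurableSpace Ω] (μ : Measure Ω) [IsProbabilityMeasure μ]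
    (ε : ℕ → Ω → ℝ) (F : ℝ → ℝ) (c α : ℝ)
    -- (F1)
    (hiid : IIDWithCDF μ ε F) (hF1 : ErrF1 F c α)
    -- (H1)
    (h : ℕ → ℝ) (hpos : ∀ n, 0 < h n)
    (hto0 : Tendsto h atTop (nhds 0))
    (hH1 : Tendsto (fun n : ℕ => (n : ℝ) * h n / |Real.log (h n)|) atTop atTop)
    -- the disjoint non-degenerate subintervals I_j = [l j, u j] ⊆ [−1,1], j = 1,…,m
    (m : ℕ) (l u : ℕ → ℝ)
    (hlu : ∀ j ∈ Finset.Icc 1 m, l j < u j)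
    (hsub : ∀ j ∈ Finset.Icc 1 m, Set.Icc (l j) (u j) ⊆ Set.Icc (-1:ℝ) 1)
    (hdisj : ∀ j ∈ Finset.Icc 1 m, ∀ k ∈ Finset.Icc 1 m, j ≠ k →
        Disjoint (Set.Icc (l j) (u j)) (Set.Icc (l k) (u k))) :
    ∀ e : ℝ, 0 < e → ∃ C : ℝ,
      Filter.limsup (fun n : ℕ =>
          μ {ω | ∃ x ∈ Set.Icc (h n) (1 - h n), ∃ j ∈ Finset.Icc 1 m,
              (∃ i ∈ Finset.Icc 1 n, ((i:ℝ)/n - x)/h n ∈ Set.Icc (l j) (u j)) ∧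
              ∀ i ∈ Finset.Icc 1 n, ((i:ℝ)/n - x)/h n ∈ Set.Icc (l j) (u j) →
                C * (|Real.log (h n)| / ((n : ℝ) * h n)) ^ (1/α) < -(ε i ω)}) atTop
        ≤ ENNReal.ofReal e :=
  block_minima_uniform_rate_general μ ε F c α hiid hF1 h hpos hto0 hH1 m l u hlu hsub

end
end

section
/- Let ε_1, ε_2, … , ε_{2d} be i.i.d. real random variables, let G be the distribution function of |ε_1|, and define the block maximum of sliding minima M := max_{j ∈ {1,…,d}} min_{i ∈ {j,…,j+d}} |ε_i|. Then for every x > 0, P{M > x} = (1 − G(x))^{d+1} + (d−1) G(x) (1 − G(x))^{d+1}, and consequently P{M > x} ≤ (1 + d G(x)) (1 − G(x))^{d}. -/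
open MeasureTheory Filter Set ProbabilityTheory

noncomputable section

/-!
Let `B j` be the event that the window `ε_j, …, ε_{j+d}` lies above `x`. Splitting `⋃_{j ≤ d} B j`
according to the first window that occurs gives the disjoint pieces `B 1` and
`{|ε_{j-1}| ≤ x} ∩ B j` for `2 ≤ j ≤ d`: if `|ε_{j-1}| > x` then `B (j-1)` occurs as well, and
conversely `ε_{j-1}` belongs to every earlier window. Each piece involves `d + 1`, resp. `d + 2`,
distinct coordinates, so independence gives the exact formula.
-/

def slidingWindow {Ω : Type*} (s : ℕ → Set Ω) (j d : ℕ) : Set Ω :=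
  ⋂ i ∈ Finset.Icc j (j + d), s i

section Windows

variable {Ω : Type*} {s : ℕ → Set Ω} {d : ℕ}

theorem mem_slidingWindow {j : ℕ} {ω : Ω} :
    ω ∈ slidingWindow s j d ↔ ∀ i ∈ Finset.Icc j (j + d), ω ∈ s i := by
  simp [slidingWindow]

theorem slidingWindow_subset {i j : ℕ} (hji : j ≤ i) (hid : i ≤ j + d) :
    slidingWindow s j d ⊆ s i :=
  fun _ hω => mem_slidingWindow.1 hω i (Finset.mem_Icc.2 ⟨hji, hid⟩)

theorem biUnion_slidingWindow_eq (hd : 1 ≤ d) :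
    ⋃ j ∈ Finset.Icc 1 d, slidingWindow s j d =
      slidingWindow s 1 d ∪ ⋃ k ∈ Finset.Ico 1 d, (s k)ᶜ ∩ slidingWindow s (k + 1) d := by
  apply Subset.antisymm
  · simp only [iUnion_subset_iff, Finset.mem_Icc, and_imp]
    intro j hj hjd
    induction j, hj using Nat.le_induction with
    | base => exact subset_union_left
    | succ k hk ih =>
      intro ω hω
      by_cases hωk : ω ∈ s k
      · have hωk' : ω ∈ slidingWindow s k d := mem_slidingWindow.2 fun i hi => by
          rcases eq_or_lt_of_le (Finset.mem_Icc.1 hi).1 with rfl | hki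
          · exact hωk
          · exact mem_slidingWindow.1 hω i (Finset.mem_Icc.2 (by grind))
        exact ih (by omega) hωk'
      · refine Or.inr (mem_biUnion (Finset.mem_coe.2 ?_) ⟨hωk, hω⟩)
        exact Finset.mem_Ico.2 ⟨hk, hjd⟩
  · refine union_subset (subset_biUnion_of_mem (u := fun j => slidingWindow s j d)
      (Finset.mem_coe.2 (Finset.mem_Icc.2 ⟨le_rfl, hd⟩))) ?_
    refine iUnion₂_subset fun k hk => inter_subset_right.trans ?_
    have hk := Finset.mem_Ico.1 hk
    exact subset_biUnion_of_mem (u := fun j => slidingWindow s j d)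
      (Finset.mem_coe.2 (Finset.mem_Icc.2 ⟨by omega, by omega⟩))

theorem pairwiseDisjoint_compl_inter_slidingWindow :
    (↑(Finset.Ico 1 d) : Set ℕ).PairwiseDisjoint fun k => (s k)ᶜ ∩ slidingWindow s (k + 1) d := by
  have key : ∀ k l, k < l → l < d →
      Disjoint ((s k)ᶜ ∩ slidingWindow s (k + 1) d) ((s l)ᶜ ∩ slidingWindow s (l + 1) d) :=
    fun k l hkl hld => disjoint_left.2 fun ω hk hl =>
      hl.1 (slidingWindow_subset (by omega) (by omega) hk.2)
  intro k hk l hl hkl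
  simp only [Finset.coe_Ico, mem_Ico] at hk hl
  rcases lt_or_gt_of_ne hkl with h | h
  · exact key k l h hl.2
  · exact (key l k h hk.2).symm

theorem disjoint_slidingWindow_biUnion_compl_inter :
    Disjoint (slidingWindow s 1 d) (⋃ k ∈ Finset.Ico 1 d, (s k)ᶜ ∩ slidingWindow s (k + 1) d) := by
  simp only [disjoint_iUnion_right, Finset.mem_Ico]
  intro k hk
  exact disjoint_left.2 fun ω h1 hk' => hk'.1 (slidingWindow_subset hk.1 (by omega) h1)

end Windows

section Independent

variable {Ω β : Type*} [MeasurableSpace Ω] [MeasurableSpace β] {μ : Measure Ω}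
  {ε : ℕ → Ω → β} {T : Set β} {q r : ENNReal} {d : ℕ}

theorem measure_slidingWindow_preimage (hind : iIndepFun ε μ) (hT : MeasurableSet T)
    (hq : ∀ i, μ (ε i ⁻¹' T) = q) (j : ℕ) :
    μ (slidingWindow (fun i => ε i ⁻¹' T) j d) = q ^ (d + 1) := by
  rw [slidingWindow, hind.measure_inter_preimage_eq_mul _ (fun _ _ => hT),
    Finset.prod_congr rfl (fun i _ => hq i), Finset.prod_const, Nat.card_Icc]
  congr 1
  omega

theorem measure_compl_inter_slidingWindow_preimage (hind : iIndepFun ε μ) (hT : MeasurableSet T)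
    (hq : ∀ i, μ (ε i ⁻¹' T) = q) (hr : ∀ i, μ (ε i ⁻¹' Tᶜ) = r) (k : ℕ) :
    μ ((ε k ⁻¹' T)ᶜ ∩ slidingWindow (fun i => ε i ⁻¹' T) (k + 1) d) = r * q ^ (d + 1) := by
  have hk : k ∉ Finset.Icc (k + 1) (k + 1 + d) := by simp
  let sets : ℕ → Set β := fun i => if i = k then Tᶜ else T
  have hsets : ∀ i ∈ Finset.Icc (k + 1) (k + 1 + d), sets i = T := fun i hi => by
    simp only [sets, if_neg (ne_of_mem_of_not_mem hi hk)]
  have heq : (ε k ⁻¹' T)ᶜ ∩ slidingWindow (fun i => ε i ⁻¹' T) (k + 1) d =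
      ⋂ i ∈ insert k (Finset.Icc (k + 1) (k + 1 + d)), ε i ⁻¹' sets i := by
    rw [Finset.set_biInter_insert, slidingWindow, ← preimage_compl]
    congr 1
    · simp [sets]
    · exact iInter₂_congr fun i hi => by rw [hsets i hi]
  rw [heq, hind.measure_inter_preimage_eq_mul _ (fun i _ => by
      by_cases h : i = k <;> simp [sets, h, hT]), Finset.prod_insert hk,
    Finset.prod_congr rfl fun i hi => by rw [hsets i hi, hq i], Finset.prod_const, Nat.card_Icc,
    show sets k = Tᶜ from if_pos rfl, hr]
  congr 2
  omega

theorem measure_biUnion_slidingWindow_preimage (hε : ∀ i, Measurable (ε i))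
    (hind : iIndepFun ε μ) (hT : MeasurableSet T) (hq : ∀ i, μ (ε i ⁻¹' T) = q)
    (hr : ∀ i, μ (ε i ⁻¹' Tᶜ) = r) (hd : 1 ≤ d) :
    μ (⋃ j ∈ Finset.Icc 1 d, slidingWindow (fun i => ε i ⁻¹' T) j d) =
      q ^ (d + 1) + (d - 1 : ℕ) * (r * q ^ (d + 1)) := by
  have hwin : ∀ j, MeasurableSet (slidingWindow (fun i => ε i ⁻¹' T) j d) :=
    fun j => Finset.measurableSet_biInter _ fun i _ => hε i hT
  rw [biUnion_slidingWindow_eq hd,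
    measure_union disjoint_slidingWindow_biUnion_compl_inter
      (Finset.measurableSet_biUnion _ fun k _ => (hε k hT).compl.inter (hwin _)),
    measure_biUnion_finset pairwiseDisjoint_compl_inter_slidingWindow
      (fun k _ => (hε k hT).compl.inter (hwin _)),
    measure_slidingWindow_preimage hind hT hq,
    Finset.sum_congr rfl fun k _ => measure_compl_inter_slidingWindow_preimage hind hT hq hr k,
    Finset.sum_const, Nat.card_Ico, nsmul_eq_mul]

end Independent

theorem one_sub_pow_succ_add_le_one_add_mul_mul_one_sub_pow {g : ℝ} (hg0 : 0 ≤ g) (hg1 : g ≤ 1)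
    (d : ℕ) :
    (1 - g) ^ (d + 1) + ((d : ℝ) - 1) * g * (1 - g) ^ (d + 1) ≤ (1 + d * g) * (1 - g) ^ d := by
  have hpow : 0 ≤ (1 - g) ^ d := pow_nonneg (by linarith) d
  have hg2 : 0 ≤ g * (2 - g) := mul_nonneg hg0 (by linarith)
  have hgap : 0 ≤ (g * (2 - g) + d * g ^ 2) * (1 - g) ^ d := by positivity
  have hdiff : (1 + d * g) * (1 - g) ^ d
      - ((1 - g) ^ (d + 1) + ((d : ℝ) - 1) * g * (1 - g) ^ (d + 1))
      = (g * (2 - g) + d * g ^ 2) * (1 - g) ^ d := by ring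
  linarith

/-- **Tail bound for block maxima of sliding minima** (key step in the proof of Lemma A.2):
if `ε_1, …, ε_{2d}` are i.i.d. with `G` the cdf of `|ε_1|`, and
`M = max_{1 ≤ j ≤ d} min_{j ≤ i ≤ j+d} |ε_i|`, then for every `x > 0`
`P{M > x} = (1−G(x))^{d+1} + (d−1) G(x) (1−G(x))^{d+1}`, and consequently
`P{M > x} ≤ (1 + d G(x)) (1−G(x))^d`. -/
theorem block_maximum_of_sliding_minima_tail
    {Ω : Type*} [MeasurableSpace Ω] (μ : Measure Ω) [IsProbabilityMeasure μ]
    (d : ℕ) (hd : 1 ≤ d)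
    (ε : ℕ → Ω → ℝ) (hmeas : ∀ i, Measurable (ε i))
    -- i.i.d.
    (hindep : iIndepFun ε μ)
    (hident : ∀ i, Measure.map (ε i) μ = Measure.map (ε 1) μ)
    -- G is the distribution function of |ε_1|
    (G : ℝ → ℝ) (hG0 : ∀ x, 0 ≤ G x)
    (hG : ∀ x : ℝ, μ {ω | |ε 1 ω| ≤ x} = ENNReal.ofReal (G x)) :
    ∀ x : ℝ, 0 < x →
      μ {ω | ∃ j ∈ Finset.Icc 1 d, ∀ i ∈ Finset.Icc j (j + d), x < |ε i ω|}
          = ENNReal.ofReal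
              ((1 - G x) ^ (d + 1) + ((d : ℝ) - 1) * G x * (1 - G x) ^ (d + 1)) ∧
      μ {ω | ∃ j ∈ Finset.Icc 1 d, ∀ i ∈ Finset.Icc j (j + d), x < |ε i ω|}
          ≤ ENNReal.ofReal ((1 + (d : ℝ) * G x) * (1 - G x) ^ d) := by
  intro x _
  set T : Set ℝ := {y | x < |y|}
  have hT : MeasurableSet T := measurable_abs measurableSet_Ioi
  have hle : ∀ i, μ (ε i ⁻¹' Tᶜ) = ENNReal.ofReal (G x) := fun i => by
    rw [(IdentDistrib.mk (hmeas i).aemeasurable (hmeas 1).aemeasurable (hident i)).measure_mem_eq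
      hT.compl, ← hG x]
    congr 1
    ext ω
    simp [T]
  have hG1 : G x ≤ 1 := ENNReal.ofReal_le_one.1 (hle 1 ▸ prob_le_one)
  have hgt : ∀ i, μ (ε i ⁻¹' T) = ENNReal.ofReal (1 - G x) := fun i => by
    rw [← compl_compl (ε i ⁻¹' T), ← preimage_compl, prob_compl_eq_one_sub (hmeas i hT.compl),
      hle i, ENNReal.ofReal_sub 1 (hG0 x), ENNReal.ofReal_one]
  have hevent : {ω | ∃ j ∈ Finset.Icc 1 d, ∀ i ∈ Finset.Icc j (j + d), x < |ε i ω|} =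
      ⋃ j ∈ Finset.Icc 1 d, slidingWindow (fun i => ε i ⁻¹' T) j d := by
    ext ω
    simp [mem_slidingWindow, T]
  have hexact : μ {ω | ∃ j ∈ Finset.Icc 1 d, ∀ i ∈ Finset.Icc j (j + d), x < |ε i ω|} =
      ENNReal.ofReal ((1 - G x) ^ (d + 1) + ((d : ℝ) - 1) * G x * (1 - G x) ^ (d + 1)) := by
    rw [hevent, measure_biUnion_slidingWindow_preimage hmeas hindep hT hgt hle hd,
      ← ENNReal.ofReal_pow (by linarith), ← ENNReal.ofReal_mul (hG0 x), ← ENNReal.ofReal_natCast,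
      ← ENNReal.ofReal_mul (Nat.cast_nonneg _), ← ENNReal.ofReal_add (by positivity)
        (mul_nonneg (Nat.cast_nonneg _) (mul_nonneg (hG0 x) (by positivity))),
      Nat.cast_sub hd, Nat.cast_one]
    ring_nf
  exact ⟨hexact, hexact ▸ ENNReal.ofReal_le_ofReal
    (one_sub_pow_succ_add_le_one_add_mul_mul_one_sub_pow (hG0 x) hG1 d)⟩

end
end
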